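/- Let m ≥ 1 and for x = (x_h,x_v) ∈ ℝᵐ × ℝ define the (m+1)×(2m) Grushin matrix σ(x) with block form [I_m, 0_m ; 0, x_hᵀ]. Let u(x) = |x_h|⁴ + 4x_v² and U(x) = u(x)^{1/4}. Then for every x ≠ 0 the function U is differentiable at x and |σ(x)ᵀ∇U(x)| = |x_h| / U(x); in particular the Hamiltonian H(x,p) = |σ(x)ᵀp| satisfies H(x,∇U(x)) = |x_h|/U(x), and U(x) ≤ |x|/ε on the set where H(x,∇U(x)) ≥ ε, for every ε > 0. -/
import Mathlib


open Set
open scoped RealInnerProductSpace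

/-- for the Grushin matrix field `σ(x) = [I_m, 0 ; 0, x_hᵀ]`
(so `|σ(x)ᵀp|² = |p_h|² + p_v²|x_h|²`), the gauge function
`U(x) = (|x_h|⁴ + 4 x_v²)^{1/4}` is differentiable away from the origin with
`|σ(x)ᵀ∇U(x)| = |x_h|/U(x)`; moreover `U(x) ≤ |x|/ε` wherever
`H(x,∇U(x)) = |x_h|/U(x) ≥ ε`. -/
theorem stmt_14 {m : ℕ} (hm : 1 ≤ m)
    (U : EuclideanSpace ℝ (Fin m) × ℝ → ℝ)
    (hU : ∀ x : EuclideanSpace ℝ (Fin m) × ℝ,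
      U x = (‖x.1‖ ^ 4 + 4 * x.2 ^ 2) ^ ((1:ℝ)/4)) :
    ∀ x : EuclideanSpace ℝ (Fin m) × ℝ, x ≠ 0 →
      ∃ (gh : EuclideanSpace ℝ (Fin m)) (gv : ℝ)
        (D : EuclideanSpace ℝ (Fin m) × ℝ →L[ℝ] ℝ),
        HasFDerivAt U D x ∧
        (∀ v : EuclideanSpace ℝ (Fin m) × ℝ, D v = ⟪gh, v.1⟫ + gv * v.2) ∧
        Real.sqrt (‖gh‖ ^ 2 + gv ^ 2 * ‖x.1‖ ^ 2) = ‖x.1‖ / U x ∧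
        ∀ ε : ℝ, 0 < ε → ε ≤ ‖x.1‖ / U x →
          U x ≤ Real.sqrt (‖x.1‖ ^ 2 + x.2 ^ 2) / ε := by
  intro x hx
  have hu : 0 < ‖x.1‖ ^ 4 + 4 * x.2 ^ 2 := by
    rcases eq_or_ne x.1 0 with h1 | h1
    · have h2 : x.2 ≠ 0 := fun h2 => hx (Prod.ext h1 h2)
      have h3 : 0 < x.2 ^ 2 := by positivity
      nlinarith [pow_nonneg (norm_nonneg x.1) 4]
    · have h3 : 0 < ‖x.1‖ ^ 4 := pow_pos (norm_pos_iff.mpr h1) 4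
      nlinarith [sq_nonneg x.2]
  set u : ℝ := ‖x.1‖ ^ 4 + 4 * x.2 ^ 2 with hu_def
  set c : ℝ := u ^ ((1:ℝ)/4 - 1) with hc_def
  have hc_pos : 0 < c := Real.rpow_pos_of_pos hu _
  have hUx : U x = u ^ ((1:ℝ)/4) := hU x
  have hUx_pos : 0 < U x := hUx ▸ Real.rpow_pos_of_pos hu _
  -- derivative of inner product part
  have h1 : HasFDerivAt (fun y : EuclideanSpace ℝ (Fin m) × ℝ => ⟪y.1, y.1⟫)
      ((fderivInnerCLM ℝ (x.1, x.1)).comp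
        ((ContinuousLinearMap.fst ℝ (EuclideanSpace ℝ (Fin m)) ℝ).prod
         (ContinuousLinearMap.fst ℝ (EuclideanSpace ℝ (Fin m)) ℝ))) x :=
    hasFDerivAt_fst.inner ℝ hasFDerivAt_fst
  have h2 := h1.mul h1
  have hsnd := hasFDerivAt_snd (𝕜 := ℝ) (E := EuclideanSpace ℝ (Fin m)) (F := ℝ) (p := x)
  have h3 := hsnd.mul hsnd
  have h4 := h2.add (h3.const_mul 4)
  have hrpow : HasDerivAt (fun t : ℝ => t ^ ((1:ℝ)/4))
      ((1/4) * u ^ ((1:ℝ)/4 - 1)) u :=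
    Real.hasDerivAt_rpow_const (Or.inl hu.ne')
  have hux : (⟪x.1, x.1⟫ * ⟪x.1, x.1⟫ + 4 * (x.2 * x.2)) = u := by
    rw [real_inner_self_eq_norm_sq, hu_def]; ring
  have h5 := hrpow.comp_hasFDerivAt_of_eq x h4 hux.symm
  have hUfun : U = fun y : EuclideanSpace ℝ (Fin m) × ℝ =>
      (⟪y.1, y.1⟫ * ⟪y.1, y.1⟫ + 4 * (y.2 * y.2)) ^ ((1:ℝ)/4) := by
    funext y
    rw [hU y, real_inner_self_eq_norm_sq]
    ring_nf
  have h6 : HasFDerivAt U ((1 / 4 * u ^ ((1:ℝ) / 4 - 1)) •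
      (⟪x.1, x.1⟫ •
            (fderivInnerCLM ℝ (x.1, x.1)).comp
              ((ContinuousLinearMap.fst ℝ (EuclideanSpace ℝ (Fin m)) ℝ).prod
                (ContinuousLinearMap.fst ℝ (EuclideanSpace ℝ (Fin m)) ℝ)) +
          ⟪x.1, x.1⟫ •
            (fderivInnerCLM ℝ (x.1, x.1)).comp
              ((ContinuousLinearMap.fst ℝ (EuclideanSpace ℝ (Fin m)) ℝ).prod
                (ContinuousLinearMap.fst ℝ (EuclideanSpace ℝ (Fin m)) ℝ)) +
        (4:ℝ) •
          (x.2 • ContinuousLinearMap.snd ℝ (EuclideanSpace ℝ (Fin m)) ℝ +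
            x.2 • ContinuousLinearMap.snd ℝ (EuclideanSpace ℝ (Fin m)) ℝ))) x := by
    rw [hUfun]; exact h5
  refine ⟨(‖x.1‖ ^ 2 * c) • x.1, 2 * x.2 * c, _, h6, ?_, ?_, ?_⟩
  · intro v
    simp only [ContinuousLinearMap.smul_apply, ContinuousLinearMap.add_apply,
      ContinuousLinearMap.comp_apply, ContinuousLinearMap.prod_apply,
      ContinuousLinearMap.coe_fst', ContinuousLinearMap.coe_snd',
      fderivInnerCLM_apply, smul_eq_mul]
    rw [real_inner_smul_left, real_inner_comm v.1 x.1, real_inner_self_eq_norm_sq]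
    ring
  · -- sqrt computation
    have hnorm : ‖(‖x.1‖ ^ 2 * c) • x.1‖ = ‖x.1‖ ^ 2 * c * ‖x.1‖ := by
      rw [norm_smul, Real.norm_eq_abs, abs_of_nonneg (by positivity)]
    have hcsq : c ^ 2 * u = (u ^ ((1:ℝ)/4))⁻¹ ^ 2 := by
      rw [hc_def, ← Real.rpow_natCast (u ^ ((1:ℝ)/4 - 1)) 2,
        ← Real.rpow_mul hu.le, ← Real.rpow_neg_one (u ^ ((1:ℝ)/4)),
        ← Real.rpow_natCast ((u ^ ((1:ℝ)/4)) ^ (-1 : ℝ)) 2,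
        ← Real.rpow_mul (by positivity), ← Real.rpow_mul hu.le]
      nth_rewrite 2 [show u = u ^ (1:ℝ) from (Real.rpow_one u).symm]
      rw [← Real.rpow_add hu]
      norm_num
    have hin : ‖(‖x.1‖ ^ 2 * c) • x.1‖ ^ 2 + (2 * x.2 * c) ^ 2 * ‖x.1‖ ^ 2
        = (‖x.1‖ / U x) ^ 2 := by
      rw [hnorm, hUx, div_pow, div_eq_mul_inv, ← inv_pow, ← hcsq, hu_def]
      ring
    rw [hin, Real.sqrt_sq (by positivity)]
  · intro ε hε hεle
    have h6 : ε * U x ≤ ‖x.1‖ := by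
      rw [le_div_iff₀ hUx_pos] at hεle; linarith
    have h7 : ‖x.1‖ ≤ Real.sqrt (‖x.1‖ ^ 2 + x.2 ^ 2) := by
      have := Real.sqrt_le_sqrt (show ‖x.1‖ ^ 2 ≤ ‖x.1‖ ^ 2 + x.2 ^ 2 by nlinarith [sq_nonneg x.2])
      rwa [Real.sqrt_sq (norm_nonneg _)] at this
    rw [le_div_iff₀ hε]
    nlinarith
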